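/- If (x,n,s) and (x̄,n̄,s̄) are (s,s̄)-mates with x̄ = x + λs and det(e₁ g₁; e₂ g₂) ≠ 0 at a point (u,v), then λ(u,v) = det(b,e)/det(e,g) at that point, where b = (b₁,b₂), e = (e₁,e₂), g = (g₁,g₂), det(p,q) = p₁q₂ − p₂q₁. Hence x̄ = x + (det(b,e)/det(e,g))·s wherever det(e,g) ≠ 0. -/

import Mathlib

open Matrix Real intervalIntegral

set_option linter.unusedVariables false

noncomputable section

abbrev V3 : Type := Fin 3 → ℝ

/-- partial derivative in the `u` direction -/
def pu {E : Type} [NormedAddCommGroup E] [NormedSpace ℝ E] (f : ℝ × ℝ → E) (p : ℝ × ℝ) : E :=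
  fderiv ℝ f p (1, 0)

/-- partial derivative in the `v` direction -/
def pv {E : Type} [NormedAddCommGroup E] [NormedSpace ℝ E] (f : ℝ × ℝ → E) (p : ℝ × ℝ) : E :=
  fderiv ℝ f p (0, 1)

/-- the third frame vector t = n × s -/
def T3 (n s : ℝ × ℝ → V3) : ℝ × ℝ → V3 := fun p => crossProduct (n p) (s p)

/-- A framed surface: x_u · n = x_v · n = 0, with (n,s) ∈ Δ. -/
structure IsFramedSurface (U : Set (ℝ × ℝ)) (x n s : ℝ × ℝ → V3) : Prop where
  smooth_x : ContDiffOn ℝ (⊤ : ℕ∞) x U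
  smooth_n : ContDiffOn ℝ (⊤ : ℕ∞) n U
  smooth_s : ContDiffOn ℝ (⊤ : ℕ∞) s U
  unit_n : ∀ p ∈ U, n p ⬝ᵥ n p = 1
  unit_s : ∀ p ∈ U, s p ⬝ᵥ s p = 1
  orth_ns : ∀ p ∈ U, n p ⬝ᵥ s p = 0
  tang_u : ∀ p ∈ U, pu x p ⬝ᵥ n p = 0
  tang_v : ∀ p ∈ U, pv x p ⬝ᵥ n p = 0

/-- basic invariants -/
def iA1 (x n s : ℝ × ℝ → V3) (p : ℝ × ℝ) : ℝ := pu x p ⬝ᵥ s p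
def iA2 (x n s : ℝ × ℝ → V3) (p : ℝ × ℝ) : ℝ := pv x p ⬝ᵥ s p
def iB1 (x n s : ℝ × ℝ → V3) (p : ℝ × ℝ) : ℝ := pu x p ⬝ᵥ T3 n s p
def iB2 (x n s : ℝ × ℝ → V3) (p : ℝ × ℝ) : ℝ := pv x p ⬝ᵥ T3 n s p
def iE1 (x n s : ℝ × ℝ → V3) (p : ℝ × ℝ) : ℝ := pu n p ⬝ᵥ s p
def iE2 (x n s : ℝ × ℝ → V3) (p : ℝ × ℝ) : ℝ := pv n p ⬝ᵥ s p
def iF1 (x n s : ℝ × ℝ → V3) (p : ℝ × ℝ) : ℝ := pu n p ⬝ᵥ T3 n s p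
def iF2 (x n s : ℝ × ℝ → V3) (p : ℝ × ℝ) : ℝ := pv n p ⬝ᵥ T3 n s p
def iG1 (x n s : ℝ × ℝ → V3) (p : ℝ × ℝ) : ℝ := pu s p ⬝ᵥ T3 n s p
def iG2 (x n s : ℝ × ℝ → V3) (p : ℝ × ℝ) : ℝ := pv s p ⬝ᵥ T3 n s p

/-- λ ≢ 0 : the set where λ ≠ 0 is dense in U. -/
def DenseNonzero (U : Set (ℝ × ℝ)) (lam : ℝ × ℝ → ℝ) : Prop :=
  ∀ p ∈ U, p ∈ closure {q ∈ U | lam q ≠ 0}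

/-- (n, n̄)-Bertrand framed surface -/
def BertrandNN (U : Set (ℝ × ℝ)) (x n s : ℝ × ℝ → V3) : Prop :=
  ∃ (xb nb sb : ℝ × ℝ → V3) (lam : ℝ × ℝ → ℝ), IsFramedSurface U xb nb sb ∧
    ContDiffOn ℝ (⊤ : ℕ∞) lam U ∧ DenseNonzero U lam ∧
    ∀ p ∈ U, xb p = x p + lam p • n p ∧ nb p = n p

/-- (n, s̄)-Bertrand framed surface -/
def BertrandNS (U : Set (ℝ × ℝ)) (x n s : ℝ × ℝ → V3) : Prop :=
  ∃ (xb nb sb : ℝ × ℝ → V3) (lam : ℝ × ℝ → ℝ), IsFramedSurface U xb nb sb ∧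
    ContDiffOn ℝ (⊤ : ℕ∞) lam U ∧ DenseNonzero U lam ∧
    ∀ p ∈ U, xb p = x p + lam p • n p ∧ sb p = n p

/-- (n, t̄)-Bertrand framed surface -/
def BertrandNT (U : Set (ℝ × ℝ)) (x n s : ℝ × ℝ → V3) : Prop :=
  ∃ (xb nb sb : ℝ × ℝ → V3) (lam : ℝ × ℝ → ℝ), IsFramedSurface U xb nb sb ∧
    ContDiffOn ℝ (⊤ : ℕ∞) lam U ∧ DenseNonzero U lam ∧
    ∀ p ∈ U, xb p = x p + lam p • n p ∧ T3 nb sb p = n p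

/-- (s, n̄)-Bertrand framed surface -/
def BertrandSN (U : Set (ℝ × ℝ)) (x n s : ℝ × ℝ → V3) : Prop :=
  ∃ (xb nb sb : ℝ × ℝ → V3) (lam : ℝ × ℝ → ℝ), IsFramedSurface U xb nb sb ∧
    ContDiffOn ℝ (⊤ : ℕ∞) lam U ∧ DenseNonzero U lam ∧
    ∀ p ∈ U, xb p = x p + lam p • s p ∧ nb p = s p

/-- (s, s̄)-Bertrand framed surface -/
def BertrandSS (U : Set (ℝ × ℝ)) (x n s : ℝ × ℝ → V3) : Prop :=
  ∃ (xb nb sb : ℝ × ℝ → V3) (lam : ℝ × ℝ → ℝ), IsFramedSurface U xb nb sb ∧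
    ContDiffOn ℝ (⊤ : ℕ∞) lam U ∧ DenseNonzero U lam ∧
    ∀ p ∈ U, xb p = x p + lam p • s p ∧ sb p = s p

/-- (s, t̄)-Bertrand framed surface -/
def BertrandST (U : Set (ℝ × ℝ)) (x n s : ℝ × ℝ → V3) : Prop :=
  ∃ (xb nb sb : ℝ × ℝ → V3) (lam : ℝ × ℝ → ℝ), IsFramedSurface U xb nb sb ∧
    ContDiffOn ℝ (⊤ : ℕ∞) lam U ∧ DenseNonzero U lam ∧
    ∀ p ∈ U, xb p = x p + lam p • s p ∧ T3 nb sb p = s p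

/-- (t, n̄)-Bertrand framed surface -/
def BertrandTN (U : Set (ℝ × ℝ)) (x n s : ℝ × ℝ → V3) : Prop :=
  ∃ (xb nb sb : ℝ × ℝ → V3) (lam : ℝ × ℝ → ℝ), IsFramedSurface U xb nb sb ∧
    ContDiffOn ℝ (⊤ : ℕ∞) lam U ∧ DenseNonzero U lam ∧
    ∀ p ∈ U, xb p = x p + lam p • T3 n s p ∧ nb p = T3 n s p

lemma sm_diffAt_comp_apply {f : ℝ × ℝ → V3} {p : ℝ × ℝ} (hf : DifferentiableAt ℝ f p) (i : Fin 3) :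
    DifferentiableAt ℝ (fun q => f q i) p :=
  ((ContinuousLinearMap.proj i : V3 →L[ℝ] ℝ).differentiableAt).comp p hf

lemma sm_fderiv_comp_apply {f : ℝ × ℝ → V3} {p : ℝ × ℝ} (hf : DifferentiableAt ℝ f p) (i : Fin 3)
    (w : ℝ × ℝ) : fderiv ℝ (fun q => f q i) p w = fderiv ℝ f p w i := by
  have := fderiv_comp (𝕜 := ℝ) p ((ContinuousLinearMap.proj i : V3 →L[ℝ] ℝ).differentiableAt) hf
  have h2 : (fun q => f q i) = (ContinuousLinearMap.proj i : V3 →L[ℝ] ℝ) ∘ f := rfl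
  rw [h2, this]
  simp [ContinuousLinearMap.fderiv]

lemma sm_fderiv_dot {f g : ℝ × ℝ → V3} {p : ℝ × ℝ} (hf : DifferentiableAt ℝ f p)
    (hg : DifferentiableAt ℝ g p) (w : ℝ × ℝ) :
    fderiv ℝ (fun q => f q ⬝ᵥ g q) p w = fderiv ℝ f p w ⬝ᵥ g p + f p ⬝ᵥ fderiv ℝ g p w := by
  have h1 : (fun q => f q ⬝ᵥ g q) = fun q => ∑ i : Fin 3, (fun q => f q i * g q i) q := rfl
  rw [h1, fderiv_fun_sum (A := fun i q => f q i * g q i) (fun i _ => ((sm_diffAt_comp_apply hf i).mul (sm_diffAt_comp_apply hg i)))]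
  simp only [ContinuousLinearMap.coe_sum', Finset.sum_apply]
  rw [Finset.sum_congr rfl (fun i _ => by
    rw [fderiv_fun_mul (sm_diffAt_comp_apply hf i) (sm_diffAt_comp_apply hg i)] )]
  simp only [ContinuousLinearMap.add_apply, ContinuousLinearMap.coe_smul', Pi.smul_apply,
    smul_eq_mul, sm_fderiv_comp_apply hf, sm_fderiv_comp_apply hg, dotProduct, Fin.sum_univ_three]
  ring

lemma sm_triple_zero (a u v w : V3) (ha : a ⬝ᵥ a = 1) (hu : a ⬝ᵥ u = 0) (hv : a ⬝ᵥ v = 0)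
    (hw : a ⬝ᵥ w = 0) : u ⬝ᵥ (crossProduct v w) = 0 := by
  simp only [crossProduct, dotProduct, Fin.sum_univ_three, LinearMap.mk₂_apply,
    Matrix.cons_val_zero, Matrix.cons_val_one, Matrix.head_cons, Matrix.cons_val_two,
    Matrix.tail_cons] at *
  linear_combination (-(u 0 * (v 1 * w 2 - v 2 * w 1) + u 1 * (v 2 * w 0 - v 0 * w 2) + u 2 * (v 0 * w 1 - v 1 * w 0))) * ha
    + (a 0 * (v 1 * w 2 - v 2 * w 1) + a 1 * (v 2 * w 0 - v 0 * w 2) + a 2 * (v 0 * w 1 - v 1 * w 0)) * hu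
    + (a 0 * (w 1 * u 2 - w 2 * u 1) + a 1 * (w 2 * u 0 - w 0 * u 2) + a 2 * (w 0 * u 1 - w 1 * u 0)) * hv
    + (a 0 * (u 1 * v 2 - u 2 * v 1) + a 1 * (u 2 * v 0 - u 0 * v 2) + a 2 * (u 0 * v 1 - u 1 * v 0)) * hw

lemma sm_binet (P Q n s : V3) (hnn : n ⬝ᵥ n = 1) (hns : n ⬝ᵥ s = 0) :
    (P ⬝ᵥ n) * (Q ⬝ᵥ crossProduct n s) - (P ⬝ᵥ crossProduct n s) * (Q ⬝ᵥ n)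
      = -(crossProduct P Q ⬝ᵥ s) := by
  simp only [crossProduct, dotProduct, Fin.sum_univ_three, LinearMap.mk₂_apply,
    Matrix.cons_val_zero, Matrix.cons_val_one, Matrix.head_cons, Matrix.cons_val_two,
    Matrix.tail_cons] at *
  linear_combination (-((P 1 * Q 2 - P 2 * Q 1) * s 0 + (P 2 * Q 0 - P 0 * Q 2) * s 1 + (P 0 * Q 1 - P 1 * Q 0) * s 2)) * hnn
    + ((P 1 * Q 2 - P 2 * Q 1) * n 0 + (P 2 * Q 0 - P 0 * Q 2) * n 1 + (P 0 * Q 1 - P 1 * Q 0) * n 2) * hns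

lemma sm_s_dot_cross (n s : V3) : s ⬝ᵥ crossProduct n s = 0 := by
  simp only [crossProduct, dotProduct, Fin.sum_univ_three, LinearMap.mk₂_apply,
    Matrix.cons_val_zero, Matrix.cons_val_one, Matrix.head_cons, Matrix.cons_val_two,
    Matrix.tail_cons]
  ring

lemma sm_contOn_apply {U : Set (ℝ × ℝ)} {F : ℝ × ℝ → V3} (hF : ContinuousOn F U) (i : Fin 3) :
    ContinuousOn (fun q => F q i) U :=
  (continuous_apply i).comp_continuousOn hF

lemma sm_contOn_dot {U : Set (ℝ × ℝ)} {F G : ℝ × ℝ → V3} (hF : ContinuousOn F U)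
    (hG : ContinuousOn G U) : ContinuousOn (fun q => F q ⬝ᵥ G q) U := by
  have h1 : (fun q => F q ⬝ᵥ G q) = fun q => ∑ i : Fin 3, F q i * G q i := rfl
  rw [h1]
  exact continuousOn_finset_sum _ (fun i _ => (sm_contOn_apply hF i).mul (sm_contOn_apply hG i))

lemma sm_contOn_cross {U : Set (ℝ × ℝ)} {F G : ℝ × ℝ → V3} (hF : ContinuousOn F U)
    (hG : ContinuousOn G U) : ContinuousOn (fun q => crossProduct (F q) (G q)) U := by
  rw [continuousOn_pi]
  intro i
  fin_cases i <;>
    simp only [crossProduct, LinearMap.mk₂_apply, Matrix.cons_val_zero, Matrix.cons_val_one,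
      Matrix.head_cons, Matrix.cons_val_two, Matrix.tail_cons] <;>
    exact ((sm_contOn_apply hF _).mul (sm_contOn_apply hG _)).sub
      ((sm_contOn_apply hF _).mul (sm_contOn_apply hG _))

lemma sm_key (U : Set (ℝ × ℝ)) (hU : IsOpen U) (x n s xb nb sb : ℝ × ℝ → V3)
    (lam : ℝ × ℝ → ℝ)
    (h : IsFramedSurface U x n s) (hb : IsFramedSurface U xb nb sb)
    (hlam : ContDiffOn ℝ (⊤ : ℕ∞) lam U)
    (hmate : ∀ p ∈ U, xb p = x p + lam p • s p ∧ sb p = s p)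
    (q : ℝ × ℝ) (hq : q ∈ U) :
    lam q * ((iB1 x n s q * iE2 x n s q - iB2 x n s q * iE1 x n s q)
      - lam q * (iE1 x n s q * iG2 x n s q - iE2 x n s q * iG1 x n s q)) = 0 := by
  have hqU : U ∈ nhds q := hU.mem_nhds hq
  have Dx : DifferentiableAt ℝ x q := (h.smooth_x.contDiffAt hqU).differentiableAt (by simp)
  have Dn : DifferentiableAt ℝ n q := (h.smooth_n.contDiffAt hqU).differentiableAt (by simp)
  have Ds : DifferentiableAt ℝ s q := (h.smooth_s.contDiffAt hqU).differentiableAt (by simp)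
  have Dlam : DifferentiableAt ℝ lam q := (hlam.contDiffAt hqU).differentiableAt (by simp)
  -- derivative of xb
  have heq : xb =ᶠ[nhds q] fun r => x r + lam r • s r :=
    Filter.eventuallyEq_of_mem hqU (fun r hr => (hmate r hr).1)
  have hxb : ∀ w : ℝ × ℝ, fderiv ℝ xb q w
      = fderiv ℝ x q w + (fderiv ℝ lam q w • s q + lam q • fderiv ℝ s q w) := by
    intro w
    rw [heq.fderiv_eq]
    rw [fderiv_fun_add (g := fun r => lam r • s r) Dx (Dlam.smul Ds), fderiv_fun_smul Dlam Ds]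
    simp [ContinuousLinearMap.smulRight_apply]
    module
  -- derivative of n ⬝ s = 0
  have hns' : ∀ w : ℝ × ℝ, fderiv ℝ n q w ⬝ᵥ s q + n q ⬝ᵥ fderiv ℝ s q w = 0 := by
    intro w
    rw [← sm_fderiv_dot Dn Ds w]
    have : (fun r => n r ⬝ᵥ s r) =ᶠ[nhds q] fun _ => (0:ℝ) :=
      Filter.eventuallyEq_of_mem hqU (fun r hr => h.orth_ns r hr)
    rw [this.fderiv_eq]
    simp
  have hsn : s q ⬝ᵥ n q = 0 := by rw [dotProduct_comm]; exact h.orth_ns q hq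
  have hst : s q ⬝ᵥ T3 n s q = 0 := sm_s_dot_cross (n q) (s q)
  -- components of pu xb / pv xb
  have comp : ∀ w : ℝ × ℝ, fderiv ℝ x q w ⬝ᵥ n q = 0 →
      fderiv ℝ xb q w ⬝ᵥ n q = -(lam q * (fderiv ℝ n q w ⬝ᵥ s q)) ∧
      fderiv ℝ xb q w ⬝ᵥ T3 n s q
        = fderiv ℝ x q w ⬝ᵥ T3 n s q + lam q * (fderiv ℝ s q w ⬝ᵥ T3 n s q) := by
    intro w htang
    constructor
    · rw [hxb w]
      rw [add_dotProduct, add_dotProduct, smul_dotProduct, smul_dotProduct, htang, hsn]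
      have h3 : fderiv ℝ s q w ⬝ᵥ n q = -(fderiv ℝ n q w ⬝ᵥ s q) := by
        have h2 : n q ⬝ᵥ fderiv ℝ s q w = fderiv ℝ s q w ⬝ᵥ n q := dotProduct_comm _ _
        have := hns' w
        linarith
      rw [h3]
      simp only [smul_eq_mul]
      ring
    · rw [hxb w]
      rw [add_dotProduct, add_dotProduct, smul_dotProduct, smul_dotProduct, hst]
      simp only [smul_eq_mul]
      ring
  have htu : fderiv ℝ x q (1,0) ⬝ᵥ n q = 0 := h.tang_u q hq
  have htv : fderiv ℝ x q (0,1) ⬝ᵥ n q = 0 := h.tang_v q hq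
  obtain ⟨c1n, c1t⟩ := comp (1,0) htu
  obtain ⟨c2n, c2t⟩ := comp (0,1) htv
  have hnbnb : nb q ⬝ᵥ nb q = 1 := hb.unit_n q hq
  have hnbs : nb q ⬝ᵥ s q = 0 := by
    have h0 : nb q ⬝ᵥ sb q = 0 := hb.orth_ns q hq
    rwa [(hmate q hq).2] at h0
  have hnbP : nb q ⬝ᵥ fderiv ℝ xb q (1,0) = 0 := by
    rw [dotProduct_comm]; exact hb.tang_u q hq
  have hnbQ : nb q ⬝ᵥ fderiv ℝ xb q (0,1) = 0 := by
    rw [dotProduct_comm]; exact hb.tang_v q hq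
  have triple : s q ⬝ᵥ crossProduct (fderiv ℝ xb q (1,0)) (fderiv ℝ xb q (0,1)) = 0 :=
    sm_triple_zero (nb q) (s q) _ _ hnbnb hnbs hnbP hnbQ
  have binet := sm_binet (fderiv ℝ xb q (1,0)) (fderiv ℝ xb q (0,1)) (n q) (s q)
    (h.unit_n q hq) (h.orth_ns q hq)
  rw [dotProduct_comm _ (s q)] at binet
  rw [triple] at binet
  have hT : crossProduct (n q) (s q) = T3 n s q := rfl
  rw [hT] at binet
  rw [c1n, c1t, c2n, c2t] at binet
  simp only [iB1, iB2, iE1, iE2, iG1, iG2, pu, pv]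
  linear_combination binet


/-- for (s,s̄)-mates, wherever det(e,g) ≠ 0, λ = det(b,e)/det(e,g). -/
theorem ss_mate_lambda_formula
    (U : Set (ℝ × ℝ)) (hU : IsOpen U) (x n s xb nb sb : ℝ × ℝ → V3)
    (lam : ℝ × ℝ → ℝ)
    (h : IsFramedSurface U x n s) (hb : IsFramedSurface U xb nb sb)
    (hlam : ContDiffOn ℝ (⊤ : ℕ∞) lam U) (hdense : DenseNonzero U lam)
    (hmate : ∀ p ∈ U, xb p = x p + lam p • s p ∧ sb p = s p)
    (p : ℝ × ℝ) (hp : p ∈ U)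
    (hdet : iE1 x n s p * iG2 x n s p - iE2 x n s p * iG1 x n s p ≠ 0) :
    lam p = (iB1 x n s p * iE2 x n s p - iB2 x n s p * iE1 x n s p)
        / (iE1 x n s p * iG2 x n s p - iE2 x n s p * iG1 x n s p) ∧
    xb p = x p + ((iB1 x n s p * iE2 x n s p - iB2 x n s p * iE1 x n s p)
        / (iE1 x n s p * iG2 x n s p - iE2 x n s p * iG1 x n s p)) • s p := by
  set φ : ℝ × ℝ → ℝ := fun q => (iB1 x n s q * iE2 x n s q - iB2 x n s q * iE1 x n s q)
      - lam q * (iE1 x n s q * iG2 x n s q - iE2 x n s q * iG1 x n s q) with hφ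
  -- continuity of φ on U
  have cpux : ContinuousOn (fun q => fderiv ℝ x q (1,0)) U :=
    (h.smooth_x.continuousOn_fderiv_of_isOpen hU (by simp)).clm_apply continuousOn_const
  have cpvx : ContinuousOn (fun q => fderiv ℝ x q (0,1)) U :=
    (h.smooth_x.continuousOn_fderiv_of_isOpen hU (by simp)).clm_apply continuousOn_const
  have cpun : ContinuousOn (fun q => fderiv ℝ n q (1,0)) U :=
    (h.smooth_n.continuousOn_fderiv_of_isOpen hU (by simp)).clm_apply continuousOn_const
  have cpvn : ContinuousOn (fun q => fderiv ℝ n q (0,1)) U :=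
    (h.smooth_n.continuousOn_fderiv_of_isOpen hU (by simp)).clm_apply continuousOn_const
  have cpus : ContinuousOn (fun q => fderiv ℝ s q (1,0)) U :=
    (h.smooth_s.continuousOn_fderiv_of_isOpen hU (by simp)).clm_apply continuousOn_const
  have cpvs : ContinuousOn (fun q => fderiv ℝ s q (0,1)) U :=
    (h.smooth_s.continuousOn_fderiv_of_isOpen hU (by simp)).clm_apply continuousOn_const
  have cT3 : ContinuousOn (T3 n s) U :=
    sm_contOn_cross h.smooth_n.continuousOn h.smooth_s.continuousOn
  have cs : ContinuousOn s U := h.smooth_s.continuousOn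
  have clam : ContinuousOn lam U := hlam.continuousOn
  have hφcont : ContinuousOn φ U := by
    apply ContinuousOn.sub
    · exact ((sm_contOn_dot cpux cT3).mul (sm_contOn_dot cpvn cs)).sub
        ((sm_contOn_dot cpvx cT3).mul (sm_contOn_dot cpun cs))
    · exact clam.mul (((sm_contOn_dot cpun cs).mul (sm_contOn_dot cpvs cT3)).sub
        ((sm_contOn_dot cpvn cs).mul (sm_contOn_dot cpus cT3)))
  -- φ vanishes on the dense set where lam ≠ 0
  have hφS : ∀ q ∈ {q ∈ U | lam q ≠ 0}, φ q = 0 := by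
    rintro q ⟨hqU, hlamq⟩
    have := sm_key U hU x n s xb nb sb lam h hb hlam hmate q hqU
    rcases mul_eq_zero.mp this with h0 | h0
    · exact absurd h0 hlamq
    · exact h0
  -- hence φ p = 0 by continuity and density
  have hφp : φ p = 0 := by
    have hne : (nhdsWithin p {q ∈ U | lam q ≠ 0}).NeBot :=
      mem_closure_iff_nhdsWithin_neBot.mp (hdense p hp)
    have t1 : Filter.Tendsto φ (nhdsWithin p {q ∈ U | lam q ≠ 0}) (nhds (φ p)) :=
      (hφcont.continuousAt (hU.mem_nhds hp)).tendsto.mono_left nhdsWithin_le_nhds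
    have hev : φ =ᶠ[nhdsWithin p {q ∈ U | lam q ≠ 0}] fun _ => (0:ℝ) :=
      eventually_nhdsWithin_of_forall hφS
    have t2 : Filter.Tendsto φ (nhdsWithin p {q ∈ U | lam q ≠ 0}) (nhds 0) :=
      Filter.Tendsto.congr' hev.symm tendsto_const_nhds
    exact tendsto_nhds_unique t1 t2
  have hlamp : lam p = (iB1 x n s p * iE2 x n s p - iB2 x n s p * iE1 x n s p)
      / (iE1 x n s p * iG2 x n s p - iE2 x n s p * iG1 x n s p) := by
    rw [eq_div_iff hdet]
    simp only [hφ] at hφp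
    linarith
  refine ⟨hlamp, ?_⟩
  rw [(hmate p hp).1, hlamp]
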